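/- Let X and Y be real Banach spaces and A : X → Y a bounded linear operator. If A is (β)-able — that is, there exist C ≥ 1 and a norm |·| on X with C⁻¹‖x‖ ≤ |x| ≤ C‖x‖ for all x ∈ X such that A : (X, |·|) → Y has property (β) — then A is weakly compact. -/

import Mathlib

open Filter Topology Pointwise NormedSpace

noncomputable section

variable {X Y : Type*} [NormedAddCommGroup X] [NormedSpace ℝ X] [CompleteSpace X]
  [NormedAddCommGroup Y] [NormedSpace ℝ Y] [CompleteSpace Y]

/-- The adjoint `A* : Y* → X*` of a bounded linear operator, `(A* g)(x) = g (A x)`. -/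
def opAdjoint (A : X →L[ℝ] Y) : StrongDual ℝ Y →L[ℝ] StrongDual ℝ X :=
  (ContinuousLinearMap.compSL X Y ℝ (RingHom.id ℝ) (RingHom.id ℝ)).flip A

/-- An operator is weakly compact if the image of the closed unit ball is
relatively compact in the weak topology of the codomain. -/
def IsWeaklyCompactOp (A : X →L[ℝ] Y) : Prop :=
  IsCompact (closure (toWeakSpace ℝ Y '' (A '' Metric.closedBall 0 1)))

/-- `r` is a norm on `E` that is `C`-equivalent to the original norm:
`C⁻¹‖u‖ ≤ r u ≤ C‖u‖`. -/
def IsEquivNorm {E : Type*} [NormedAddCommGroup E] [NormedSpace ℝ E]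
    (C : ℝ) (r : E → ℝ) : Prop :=
  (∀ u v : E, r (u + v) ≤ r u + r v) ∧ (∀ (a : ℝ) (u : E), r (a • u) = |a| * r u) ∧
    ∀ u : E, C⁻¹ * ‖u‖ ≤ r u ∧ r u ≤ C * ‖u‖

/-- `A : (X, nr) → Y` has property (β) of Rolewicz. -/
def HasPropertyBeta (A : X →L[ℝ] Y) (nr : X → ℝ) : Prop :=
  ∀ ε : ℝ, 0 < ε → ∃ β : ℝ, 0 < β ∧ ∀ x : X, nr x ≤ 1 → ∀ xs : ℕ → X,
    (∀ n, nr (xs n) ≤ 1) → (∀ m n, m ≠ n → ε ≤ ‖A (xs m) - A (xs n)‖) →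
    ∃ n, nr (x + xs n) ≤ 2 * (1 - β)

/-- `A` is (β)-able: some equivalent norm on `X` makes `A` have property (β). -/
def BetaAble (A : X →L[ℝ] Y) : Prop :=
  ∃ C : ℝ, 1 ≤ C ∧ ∃ nr : X → ℝ, IsEquivNorm C nr ∧ HasPropertyBeta A nr

/-!
If `A` is not weakly compact, Banach–Alaoglu yields a point `z` of the weak* closure of the image
of `A(B_X)` in `Y**` which is not in `Y`, hence at some distance `c > 0` from `Y`. Alternating
Helly's lemma (a functional of norm `≤ 1` vanishing on finitely many vectors of `Y` on which `z`
exceeds `c`) with weak* approximation of `z` produces `xₙ ∈ B_X` and `fₙ ∈ B_{Y*}` with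
`fₙ (A xₘ) = 0` for `m < n` and `fₙ (A xₘ) ≥ c / 2` for `n ≤ m`. Convex blocks of `(xₙ)` with
disjoint supports then have `c / 2`-separated images under `A`, so property (β) lets one average
two such blocks to shrink the equivalent norm by the factor `1 - β`. Iterating gives blocks of
arbitrarily small norm, although `‖A v‖ ≥ c / 2` for every block `v`.
-/

section

variable {E F : Type*} [NormedAddCommGroup E] [NormedSpace ℝ E]
  [NormedAddCommGroup F] [NormedSpace ℝ F]

theorem exists_mem_closure_notMem_range_of_not_isWeaklyCompactOp {A : E →L[ℝ] F}
    (hA : ¬ IsWeaklyCompactOp A) :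
    ∃ z ∈ closure
        (inclusionInDoubleDualWeak ℝ F '' (toWeakSpace ℝ F '' (A '' Metric.closedBall 0 1))),
      z ∉ Set.range (inclusionInDoubleDualWeak ℝ F) := by
  contrapose! hA
  refine isCompact_closure_of_isBounded ℝ F _ ?_ hA
  rw [(toWeakSpace ℝ F).injective.preimage_image]
  exact Metric.isBounded_closedBall.image A

theorem exists_norm_le_one_forall_eq_zero_lt_apply (z : StrongDual ℝ (StrongDual ℝ F)) {c : ℝ}
    (hc : ∀ y : F, c < ‖z - inclusionInDoubleDual ℝ F y‖) (s : Finset F) :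
    ∃ g : StrongDual ℝ F, ‖g‖ ≤ 1 ∧ (∀ y ∈ s, g y = 0) ∧ c < z g := by
  let ev : s → StrongDual ℝ F →ₗ[ℝ] ℝ := fun y => (inclusionInDoubleDual ℝ F y).toLinearMap
  obtain ⟨V, hV⟩ : ∃ V : Submodule ℝ (StrongDual ℝ F), V = ⨅ y, LinearMap.ker (ev y) := ⟨_, rfl⟩
  obtain ⟨G, hGz, hG⟩ := exists_extension_norm_eq V (z.comp V.subtypeL)
  -- `z - G` vanishes on the common kernel of the evaluations, so it is evaluation at a vector.
  have hker : ⨅ y, LinearMap.ker (ev y) ≤ LinearMap.ker (z - G).toLinearMap := fun g hg => by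
    simp [hGz ⟨g, hV ▸ hg⟩]
  obtain ⟨a, ha⟩ :=
    (Submodule.mem_span_range_iff_exists_fun ℝ).1 (mem_span_of_iInf_ker_le_ker hker)
  have hzG : z - G = inclusionInDoubleDual ℝ F (∑ y, a y • (y : F)) := by
    ext g
    simpa [ev] using (LinearMap.congr_fun ha g).symm
  have hcG : c < ‖G‖ := by
    have := hc (∑ y, a y • (y : F))
    rw [← hzG] at this
    convert this using 2
    exact (sub_sub_cancel z G).symm
  rw [hG] at hcG
  obtain ⟨v, hv, hcv⟩ := ContinuousLinearMap.exists_lt_apply_of_lt_opNorm _ hcG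
  have hvV : (v : StrongDual ℝ F) ∈ ⨅ y, LinearMap.ker (ev y) := hV ▸ v.2
  have hvs : ∀ y ∈ s, (v : StrongDual ℝ F) y = 0 := fun y hy =>
    (Submodule.mem_iInf _).1 hvV ⟨y, hy⟩
  rcases lt_abs.1 (Real.norm_eq_abs _ ▸ hcv) with hcv | hcv
  · exact ⟨v, hv.le, hvs, hcv⟩
  · refine ⟨-v, by simpa using hv.le, fun y hy => by simp [hvs y hy], by simpa using hcv⟩

theorem exists_pos_forall_lt_norm_sub_inclusionInDoubleDual [CompleteSpace F]
    {z : StrongDual ℝ (StrongDual ℝ F)} (hz : z ∉ Set.range (inclusionInDoubleDual ℝ F)) :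
    ∃ c > 0, ∀ y : F, c < ‖z - inclusionInDoubleDual ℝ F y‖ := by
  have hcl : IsClosed (Set.range (inclusionInDoubleDual ℝ F)) :=
    (inclusionInDoubleDualLi (E := F) ℝ).isometry.isUniformInducing.isComplete_range.isClosed
  have hd := (hcl.notMem_iff_infDist_pos ⟨_, Set.mem_range_self 0⟩).1 hz
  refine ⟨_, half_pos hd, fun y => ?_⟩
  calc _ < Metric.infDist z (Set.range (inclusionInDoubleDual ℝ F)) := half_lt_self hd
    _ ≤ dist z (inclusionInDoubleDual ℝ F y) := Metric.infDist_le_dist_of_mem ⟨y, rfl⟩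
    _ = ‖z - inclusionInDoubleDual ℝ F y‖ := dist_eq_norm z _

theorem WeakDual.exists_mem_forall_dist_lt_of_mem_closure {𝕜 E : Type*} [NormedField 𝕜]
    [AddCommGroup E] [Module 𝕜 E] [TopologicalSpace E] {S : Set (WeakDual 𝕜 E)}
    {z : WeakDual 𝕜 E} (hz : z ∈ closure S) (t : Finset E) {δ : ℝ} (hδ : 0 < δ) :
    ∃ w ∈ S, ∀ g ∈ t, dist (w g) (z g) < δ := by
  have hopen : IsOpen (⋂ g ∈ t, (fun w : WeakDual 𝕜 E => w g) ⁻¹' Metric.ball (z g) δ) :=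
    isOpen_biInter_finset fun g _ => Metric.isOpen_ball.preimage (WeakDual.eval_continuous g)
  obtain ⟨w, hw, hwS⟩ := mem_closure_iff.1 hz _ hopen (by simp [hδ])
  exact ⟨w, hwS, by simpa using hw⟩

structure IsSeparatingArray (A : E →L[ℝ] F) (a : ℝ) (u : ℕ → E) (f : ℕ → StrongDual ℝ F) :
    Prop where
  norm_le_one : ∀ n, ‖f n‖ ≤ 1
  apply_eq_zero : ∀ m n, m < n → f n (A (u m)) = 0
  le_apply : ∀ n m, n ≤ m → a ≤ f n (A (u m))

theorem exists_isSeparatingArray_of_not_isWeaklyCompactOp [CompleteSpace F] {A : E →L[ℝ] F}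
    (hA : ¬ IsWeaklyCompactOp A) :
    ∃ a > 0, ∃ (x : ℕ → E) (f : ℕ → StrongDual ℝ F),
      (∀ n, ‖x n‖ ≤ 1) ∧ IsSeparatingArray A a x f := by
  classical
  obtain ⟨z, hz, hzJ⟩ := exists_mem_closure_notMem_range_of_not_isWeaklyCompactOp hA
  obtain ⟨c, hc0, hc⟩ := exists_pos_forall_lt_norm_sub_inclusionInDoubleDual
    (z := WeakDual.toStrongDual z) fun ⟨y, hy⟩ =>
      hzJ ⟨toWeakSpace ℝ F y, (WeakDual.toStrongDual_inj _ z).1 hy⟩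
  have hlow : ∀ (g : StrongDual ℝ F) (y : F), c < z g → dist (g y) (z g) < c / 2 → c / 2 < g y :=
    fun g y hg hy => by linarith [(abs_sub_lt_iff.1 (Real.dist_eq _ _ ▸ hy)).2]
  -- Helly's lemma makes the new functional vanish on the earlier `A xᵢ`; approximating `z` weak*
  -- on the new and all earlier functionals makes each of them large at the new `A x`.
  have hstep : ∀ s : Finset (E × StrongDual ℝ F), (∀ q ∈ s, c < z q.2) →
      ∃ x g, (‖x‖ ≤ 1 ∧ ‖g‖ ≤ 1 ∧ c < z g ∧ c / 2 < g (A x)) ∧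
        ∀ q ∈ s, g (A q.1) = 0 ∧ c / 2 < q.2 (A x) := by
    intro s hs
    obtain ⟨g, hg1, hg0, hgz⟩ :=
      exists_norm_le_one_forall_eq_zero_lt_apply _ hc (s.image fun q => A q.1)
    obtain ⟨-, ⟨-, ⟨-, ⟨x, hx, rfl⟩, rfl⟩, rfl⟩, hw⟩ :=
      WeakDual.exists_mem_forall_dist_lt_of_mem_closure hz (insert g (s.image Prod.snd))
        (half_pos hc0)
    refine ⟨x, g, ⟨mem_closedBall_zero_iff.1 hx, hg1, hgz,
      hlow g _ hgz (hw g (Finset.mem_insert_self _ _))⟩, fun q hq =>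
      ⟨hg0 _ (Finset.mem_image_of_mem _ hq), hlow q.2 _ (hs q hq) ?_⟩⟩
    exact hw q.2 (Finset.mem_insert_of_mem (Finset.mem_image_of_mem _ hq))
  obtain ⟨p, hP, hr⟩ := exists_seq_of_forall_finset_exists
    (fun p : E × StrongDual ℝ F => ‖p.1‖ ≤ 1 ∧ ‖p.2‖ ≤ 1 ∧ c < z p.2 ∧ c / 2 < p.2 (A p.1))
    (fun q p => p.2 (A q.1) = 0 ∧ c / 2 < q.2 (A p.1)) fun s hs => by
      obtain ⟨x, g, hxg, hsg⟩ := hstep s fun q hq => (hs q hq).2.2.1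
      exact ⟨(x, g), hxg, hsg⟩
  refine ⟨c / 2, half_pos hc0, fun n => (p n).1, fun n => (p n).2, fun n => (hP n).1,
    fun n => (hP n).2.1, fun m n hmn => (hr m n hmn).1, fun n m hnm => ?_⟩
  rcases hnm.eq_or_lt with rfl | hnm
  · exact (hP n).2.2.2.le
  · exact (hr n m hnm).2.le

theorem le_of_mem_convexHull_image_Icc {u : ℕ → E} {N M : ℕ} {v : E}
    (hv : v ∈ convexHull ℝ (u '' Set.Icc N M)) : N ≤ M := by
  by_contra! h
  simp [Set.Icc_eq_empty_of_lt h] at hv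

def HasConvexBlocksLE (u : ℕ → E) (nr : E → ℝ) (r : ℝ) : Prop :=
  ∀ N, ∃ M, ∃ v ∈ convexHull ℝ (u '' Set.Icc N M), nr v ≤ r

def HasPropertyBetaAt (A : E →L[ℝ] F) (nr : E → ℝ) (ε β : ℝ) : Prop :=
  ∀ x, nr x ≤ 1 → ∀ xs : ℕ → E, (∀ n, nr (xs n) ≤ 1) →
    (∀ m n, m ≠ n → ε ≤ ‖A (xs m) - A (xs n)‖) → ∃ n, nr (x + xs n) ≤ 2 * (1 - β)

theorem HasPropertyBeta.exists_lt_one {A : E →L[ℝ] F} {nr : E → ℝ} (hP : HasPropertyBeta A nr)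
    {ε : ℝ} (hε : 0 < ε) : ∃ β, 0 < β ∧ β < 1 ∧ HasPropertyBetaAt A nr ε β := by
  obtain ⟨β, hβ0, hβ⟩ := hP ε hε
  refine ⟨min β (1 / 2), lt_min hβ0 (by norm_num), (min_le_right _ _).trans_lt (by norm_num),
    fun x hx xs hxs hsep => ?_⟩
  obtain ⟨n, hn⟩ := hβ x hx xs hxs hsep
  exact ⟨n, hn.trans (by linarith [min_le_left β (1 / 2)])⟩

namespace IsSeparatingArray

variable {A : E →L[ℝ] F} {a : ℝ} {u : ℕ → E} {f : ℕ → StrongDual ℝ F} {nr : E → ℝ}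

theorem smul (h : IsSeparatingArray A a u f) {c : ℝ} (hc : 0 ≤ c) :
    IsSeparatingArray A (c * a) (c • u) f where
  norm_le_one := h.norm_le_one
  apply_eq_zero m n hmn := by simp [h.apply_eq_zero m n hmn]
  le_apply n m hnm := by simpa using mul_le_mul_of_nonneg_left (h.le_apply n m hnm) hc

theorem apply_le_norm (h : IsSeparatingArray A a u f) (n : ℕ) (y : F) : f n y ≤ ‖y‖ :=
  (Real.le_norm_self _).trans (((f n).le_of_opNorm_le (h.norm_le_one n) y).trans_eq (one_mul _))

theorem le_apply_of_mem_convexHull (h : IsSeparatingArray A a u f) {N M : ℕ} {v : E}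
    (hv : v ∈ convexHull ℝ (u '' Set.Icc N M)) : a ≤ f N (A v) := by
  have hconv : Convex ℝ {w : E | a ≤ f N (A w)} :=
    (convex_Ici a).linear_preimage ((f N).comp A).toLinearMap
  refine convexHull_min ?_ hconv hv
  rintro _ ⟨i, hi, rfl⟩
  exact h.le_apply N i hi.1

theorem apply_eq_zero_of_mem_convexHull (h : IsSeparatingArray A a u f) {N M n : ℕ} {v : E}
    (hv : v ∈ convexHull ℝ (u '' Set.Icc N M)) (hMn : M < n) : f n (A v) = 0 := by
  have hconv : Convex ℝ {w : E | f n (A w) = 0} :=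
    (convex_singleton 0).linear_preimage ((f n).comp A).toLinearMap
  refine convexHull_min ?_ hconv hv
  rintro _ ⟨i, hi, rfl⟩
  exact h.apply_eq_zero i n (hi.2.trans_lt hMn)

theorem le_norm_sub_of_mem_convexHull (h : IsSeparatingArray A a u f) {N₁ M₁ N₂ M₂ : ℕ} {v w : E}
    (hv : v ∈ convexHull ℝ (u '' Set.Icc N₁ M₁)) (hw : w ∈ convexHull ℝ (u '' Set.Icc N₂ M₂))
    (hMN : M₁ < N₂) : a ≤ ‖A w - A v‖ :=
  calc a ≤ f N₂ (A w - A v) := by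
        rw [map_sub, h.apply_eq_zero_of_mem_convexHull hv hMN, sub_zero]
        exact h.le_apply_of_mem_convexHull hw
    _ ≤ ‖A w - A v‖ := h.apply_le_norm _ _

theorem exists_separated_of_hasConvexBlocksLE (h : IsSeparatingArray A a u f) {r : ℝ}
    (hb : HasConvexBlocksLE u nr r) (N : ℕ) :
    ∃ (w : ℕ → E) (K : ℕ → ℕ), (∀ j, w j ∈ convexHull ℝ (u '' Set.Icc N (K j)) ∧ nr (w j) ≤ r) ∧
      Pairwise fun p q => a ≤ ‖A (w p) - A (w q)‖ := by
  choose M v hv hvr using hb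
  -- consecutive disjoint blocks: the `j`-th one occupies `[g j, M (g j)]`
  let g : ℕ → ℕ := fun j => (fun n => M n + 1)^[j] N
  have hg_succ : ∀ j, g (j + 1) = M (g j) + 1 := fun j => Function.iterate_succ_apply' _ _ _
  have hg_mono : StrictMono g := strictMono_nat_of_lt_succ fun j =>
    (hg_succ j).symm ▸ Nat.lt_succ_of_le (le_of_mem_convexHull_image_Icc (hv (g j)))
  have hsep : ∀ p q, p < q → a ≤ ‖A (v (g q)) - A (v (g p))‖ := fun p q hpq =>
    h.le_norm_sub_of_mem_convexHull (hv (g p)) (hv (g q)) <| by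
      have := hg_mono.monotone (Nat.succ_le_of_lt hpq)
      rw [hg_succ] at this
      omega
  refine ⟨fun j => v (g j), fun j => M (g j), fun j => ⟨convexHull_mono (Set.image_mono
    (Set.Icc_subset_Icc_left (hg_mono.monotone (Nat.zero_le j)))) (hv (g j)), hvr _⟩,
    fun p q hpq => ?_⟩
  rcases hpq.lt_or_gt with hpq | hpq
  · rw [norm_sub_rev]
    exact hsep p q hpq
  · exact hsep q p hpq

theorem hasConvexBlocksLE_one_sub_mul (h : IsSeparatingArray A a u f)
    (hsmul : ∀ (c : ℝ) x, nr (c • x) = |c| * nr x) {β : ℝ} (hβ : HasPropertyBetaAt A nr a β)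
    {r : ℝ} (hr0 : 0 < r) (hr1 : r ≤ 1) (hb : HasConvexBlocksLE u nr r) :
    HasConvexBlocksLE u nr ((1 - β) * r) := by
  intro N
  obtain ⟨w, K, hw, hsep⟩ := h.exists_separated_of_hasConvexBlocksLE hb N
  have hscale : ∀ j, nr (r⁻¹ • w j) ≤ 1 := fun j => by
    rw [hsmul, abs_of_pos (inv_pos.2 hr0), inv_mul_le_iff₀ hr0, mul_one]
    exact (hw j).2
  obtain ⟨j, hj⟩ := hβ _ (hscale 0) (fun n => r⁻¹ • w (n + 1)) (fun n => hscale _)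
    fun m n hmn => by
      rw [map_smul, map_smul, ← smul_sub, norm_smul, Real.norm_of_nonneg (inv_nonneg.2 hr0.le)]
      exact (hsep (by omega : m + 1 ≠ n + 1)).trans
        (le_mul_of_one_le_left (norm_nonneg _) ((one_le_inv₀ hr0).2 hr1))
  refine ⟨max (K 0) (K (j + 1)), (1 / 2 : ℝ) • w 0 + (1 / 2 : ℝ) • w (j + 1),
    convex_convexHull ℝ _
      (convexHull_mono (Set.image_mono (Set.Icc_subset_Icc_right (le_max_left _ _))) (hw 0).1)
      (convexHull_mono (Set.image_mono (Set.Icc_subset_Icc_right (le_max_right _ _))) (hw _).1)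
      (by norm_num) (by norm_num) (by norm_num), ?_⟩
  have hmid : (1 / 2 : ℝ) • w 0 + (1 / 2 : ℝ) • w (j + 1) =
      (r / 2) • (r⁻¹ • w 0 + r⁻¹ • w (j + 1)) := by
    rw [smul_add, smul_smul, smul_smul, div_mul_eq_mul_div, mul_inv_cancel₀ hr0.ne']
  rw [hmid, hsmul, abs_of_pos (half_pos hr0)]
  calc r / 2 * nr (r⁻¹ • w 0 + r⁻¹ • w (j + 1)) ≤ r / 2 * (2 * (1 - β)) := by gcongr
    _ = (1 - β) * r := by ring

theorem hasConvexBlocksLE_pow (h : IsSeparatingArray A a u f)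
    (hsmul : ∀ (c : ℝ) x, nr (c • x) = |c| * nr x) {β : ℝ} (hβ : HasPropertyBetaAt A nr a β)
    (hβ0 : 0 < β) (hβ1 : β < 1) (hu : ∀ n, nr (u n) ≤ 1) (k : ℕ) :
    HasConvexBlocksLE u nr ((1 - β) ^ k) := by
  induction k with
  | zero => exact fun N => ⟨N, u N, subset_convexHull ℝ _ ⟨N, Set.left_mem_Icc.2 le_rfl, rfl⟩,
      by simpa using hu N⟩
  | succ k ih =>
    rw [pow_succ']
    exact h.hasConvexBlocksLE_one_sub_mul hsmul hβ (pow_pos (by linarith) k)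
      (pow_le_one₀ (by linarith) (by linarith)) ih

theorem not_hasPropertyBeta (h : IsSeparatingArray A a u f) (ha : 0 < a) {C : ℝ} (hC : 0 < C)
    (hnr : IsEquivNorm C nr) (hu : ∀ n, nr (u n) ≤ 1) : ¬ HasPropertyBeta A nr := by
  intro hP
  obtain ⟨β, hβ0, hβ1, hβ⟩ := hP.exists_lt_one ha
  have hbound : ∀ k : ℕ, a ≤ ‖A‖ * C * (1 - β) ^ k := fun k => by
    obtain ⟨M, v, hv, hvr⟩ := h.hasConvexBlocksLE_pow hnr.2.1 hβ hβ0 hβ1 hu k 0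
    calc a ≤ f 0 (A v) := h.le_apply_of_mem_convexHull hv
      _ ≤ ‖A v‖ := h.apply_le_norm 0 _
      _ ≤ ‖A‖ * ‖v‖ := A.le_opNorm v
      _ ≤ ‖A‖ * (C * nr v) := by gcongr; exact (inv_mul_le_iff₀ hC).1 (hnr.2.2 v).1
      _ ≤ ‖A‖ * C * (1 - β) ^ k := by rw [← mul_assoc]; gcongr
  have hlim : Tendsto (fun k : ℕ => ‖A‖ * C * (1 - β) ^ k) atTop (𝓝 0) := by
    simpa using (tendsto_pow_atTop_nhds_zero_of_lt_one (by linarith) (by linarith)).const_mul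
      (‖A‖ * C)
  exact ha.not_ge (ge_of_tendsto' hlim hbound)

end IsSeparatingArray

end

/-- Proposition 6.2 of the paper: a (β)-able operator is weakly
compact. -/
theorem statement8 (A : X →L[ℝ] Y) (h : BetaAble A) : IsWeaklyCompactOp A := by
  obtain ⟨C, hC, nr, hnr, hP⟩ := h
  by_contra hA
  obtain ⟨a, ha, x, f, hx, hxf⟩ := exists_isSeparatingArray_of_not_isWeaklyCompactOp hA
  have hC0 : 0 < C := zero_lt_one.trans_le hC
  refine (hxf.smul (inv_nonneg.2 hC0.le)).not_hasPropertyBeta (by positivity) hC0 hnr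
    (fun n => ?_) hP
  calc nr (C⁻¹ • x n) ≤ C * ‖C⁻¹ • x n‖ := (hnr.2.2 _).2
    _ = ‖x n‖ := by
      rw [norm_smul, Real.norm_of_nonneg (inv_nonneg.2 hC0.le), mul_inv_cancel_left₀ hC0.ne']
    _ ≤ 1 := hx n
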